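/- The pair (Â, B) satisfies the Kalman rank condition, i.e. span{Â^l B v : v ∈ ℝ^m, 0 ≤ l ≤ n−1} = ℝ^d, and moreover V = exp(Â) ∫₀¹ exp(−sÂ) B B* exp(−sÂ*) ds; in particular span{Â^l B v : v ∈ ℝ^m, 0 ≤ l ≤ k−1} = E_k for every k ∈ {1,…,n}. -/

import Mathlib

open Matrix MeasureTheory

noncomputable section

/-- The span of the vectors `A^l B v` for `l < N`, `v ∈ ℝ^m`; for `N = k` this is `E_k`. -/
def kalmanSpan (d m : ℕ) (A : Matrix (Fin d) (Fin d) ℝ) (B : Matrix (Fin d) (Fin m) ℝ)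
    (N : ℕ) : Submodule ℝ (Fin d → ℝ) :=
  Submodule.span ℝ {x | ∃ l, l < N ∧ ∃ v : Fin m → ℝ, x = (A ^ l * B).mulVec v}

/-- `d_k = dim E_k` (with `d_0 = 0`). -/
def dk {d m : ℕ} (A : Matrix (Fin d) (Fin d) ℝ) (B : Matrix (Fin d) (Fin m) ℝ) (k : ℕ) : ℕ :=
  Module.finrank ℝ (kalmanSpan d m A B k)

/-- The level of an index `j` (zero-based): the unique `k ≥ 1` with `d_{k−1} ≤ j < d_k`
(zero-based), i.e. `d_{k−1} < j+1 ≤ d_k` in one-based labelling. -/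
def lvl {d m : ℕ} (A : Matrix (Fin d) (Fin d) ℝ) (B : Matrix (Fin d) (Fin m) ℝ)
    (j : Fin d) : ℕ :=
  sInf {k : ℕ | (j : ℕ) < dk A B k}

/-- The entries of the matrices `u_k`, arranged as a `d × m` array:
for `d_{k−1} < j ≤ d_k` (one-based) the `j`-th row of `u_k` is
`(⟨e_j, A^{k−1} B e_i⟩ / (k−1)!)_i`. -/
def uEnt {d m : ℕ} (A : Matrix (Fin d) (Fin d) ℝ) (B : Matrix (Fin d) (Fin m) ℝ)
    (e : Fin d → Fin d → ℝ) (j : Fin d) (i : Fin m) : ℝ :=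
  (e j ⬝ᵥ fun a => (A ^ (lvl A B j - 1) * B) a i) / Nat.factorial (lvl A B j - 1)

/-- `Û(r)`: the `d × m` matrix whose `j`-th row, for `d_{k−1} < j ≤ d_k`, is `r^{k−1}`
times the corresponding row of `u_k`. -/
def Uhat {d m : ℕ} (A : Matrix (Fin d) (Fin d) ℝ) (B : Matrix (Fin d) (Fin m) ℝ)
    (e : Fin d → Fin d → ℝ) (r : ℝ) : Matrix (Fin d) (Fin m) ℝ :=
  Matrix.of fun j i => r ^ (lvl A B j - 1) * uEnt A B e j i

/-- `J_t`: the diagonal matrix whose `j`-th diagonal entry, for `d_{k−1} < j ≤ d_k`,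
is `t^{k−1/2}` (real power). -/
def Jmat {d m : ℕ} (A : Matrix (Fin d) (Fin d) ℝ) (B : Matrix (Fin d) (Fin m) ℝ)
    (t : ℝ) : Matrix (Fin d) (Fin d) ℝ :=
  Matrix.diagonal fun j => t ^ ((lvl A B j : ℝ) - 1 / 2)

/-- `D_ε`: the diagonal matrix whose `j`-th diagonal entry, for `d_{k−1} < j ≤ d_k`,
is `ε^{k−1}`. -/
def Dmat {d m : ℕ} (A : Matrix (Fin d) (Fin d) ℝ) (B : Matrix (Fin d) (Fin m) ℝ)
    (ε : ℝ) : Matrix (Fin d) (Fin d) ℝ :=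
  Matrix.diagonal fun j => ε ^ (lvl A B j - 1)

/-- `V`: the `n × n` block matrix with `(k,l)`-block
`V_{kl} = (−1)^{l+1} u_k u_l* (k−1)!(l−1)!/(k+l−1)!`, written entrywise. -/
def Vmat {d m : ℕ} (A : Matrix (Fin d) (Fin d) ℝ) (B : Matrix (Fin d) (Fin m) ℝ)
    (e : Fin d → Fin d → ℝ) : Matrix (Fin d) (Fin d) ℝ :=
  Matrix.of fun a b =>
    (-1 : ℝ) ^ (lvl A B b + 1) *
      ((Nat.factorial (lvl A B a - 1) * Nat.factorial (lvl A B b - 1) : ℝ) /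
        Nat.factorial (lvl A B a + lvl A B b - 1)) *
      ∑ i : Fin m, uEnt A B e a i * uEnt A B e b i

/-- `Γ_t^ε = ∫₀ᵗ exp(−εsA) B B* exp(−εsA*) ds`, defined entrywise. -/
def Gamma {d m : ℕ} (A : Matrix (Fin d) (Fin d) ℝ) (B : Matrix (Fin d) (Fin m) ℝ)
    (ε t : ℝ) : Matrix (Fin d) (Fin d) ℝ :=
  Matrix.of fun i j => ∫ s in (0:ℝ)..t,
    (NormedSpace.exp ((-(ε * s)) • A) * B * Bᵀ * NormedSpace.exp ((-(ε * s)) • Aᵀ)) i j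

open Classical in
/-- `Â`: the matrix characterised in the orthonormal basis `e` by
`⟨e_i, Â e_j⟩ = ⟨e_i, A e_j⟩` whenever there is `k ∈ {1,…,n−1}` with
`d_{k−1} < j ≤ d_k` and `d_k < i ≤ d_{k+1}` (one-based indices), and
`⟨e_i, Â e_j⟩ = 0` otherwise. -/
def Ahat {d m : ℕ} (A : Matrix (Fin d) (Fin d) ℝ) (B : Matrix (Fin d) (Fin m) ℝ)
    (e : Fin d → Fin d → ℝ) (n : ℕ) : Matrix (Fin d) (Fin d) ℝ :=
  Matrix.of fun a b =>
    ∑ i : Fin d, ∑ j : Fin d,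
      (if ∃ k, 1 ≤ k ∧ k ≤ n - 1 ∧
            (dk A B (k - 1) < (j : ℕ) + 1 ∧ (j : ℕ) + 1 ≤ dk A B k) ∧
            (dk A B k < (i : ℕ) + 1 ∧ (i : ℕ) + 1 ≤ dk A B (k + 1))
        then e i ⬝ᵥ A.mulVec (e j) else 0) * e i a * e j b

/-! In the adapted basis, `Â` keeps exactly the blocks of `A` that map level `k` to level `k + 1`,
so `Â` raises levels by one and `Â ^ n = 0`. Since `A` maps `E_k` into `E_{k+1}`, the vector
`Â^k B v` is the level-`(k+1)` part of `A^k B v`, whose remaining part lies in `E_k`; by induction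
both pairs have the same Kalman filtration. Row `a` (of level `k`) of `exp(tÂ) B` is therefore
`t^(k-1) u_k`, and writing `exp(Â) Γ = ∫₀¹ exp((1-s)Â) B (exp(-sÂ) B)* ds` turns each entry of the
right-hand side into a Beta integral `∫₀¹ s^(l-1) (1-s)^(k-1) ds = (k-1)! (l-1)! / (k+l-1)!`. -/

open Finset

section Orthonormal

variable {ι : Type*} [Fintype ι] [DecidableEq ι] {e : ι → ι → ℝ}

theorem sum_dotProduct_smul_eq_of_orthonormal
    (h_on : ∀ i j, e i ⬝ᵥ e j = if i = j then (1 : ℝ) else 0) (x : ι → ℝ) :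
    ∑ i, (e i ⬝ᵥ x) • e i = x := by
  have hQ : (Matrix.of e)ᵀ * Matrix.of e = 1 :=
    mul_eq_one_comm.mp <| Matrix.ext fun i j => by rw [Matrix.one_apply, ← h_on i j]; rfl
  calc ∑ i, (e i ⬝ᵥ x) • e i = (Matrix.of e)ᵀ *ᵥ (Matrix.of e *ᵥ x) := by
        ext a
        simp only [Finset.sum_apply, Pi.smul_apply, smul_eq_mul, Matrix.mulVec, dotProduct,
          Matrix.transpose_apply, Matrix.of_apply]
        exact Finset.sum_congr rfl fun i _ => mul_comm _ _
    _ = x := by rw [Matrix.mulVec_mulVec, hQ, Matrix.one_mulVec]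

theorem dotProduct_mulVec_eq_sum_of_orthonormal
    (h_on : ∀ i j, e i ⬝ᵥ e j = if i = j then (1 : ℝ) else 0) (M : Matrix ι ι ℝ) (x y : ι → ℝ) :
    x ⬝ᵥ M *ᵥ y = ∑ i, (x ⬝ᵥ M *ᵥ e i) * (e i ⬝ᵥ y) := by
  conv_lhs => rw [← sum_dotProduct_smul_eq_of_orthonormal h_on y]
  simp only [Matrix.mulVec_sum, Matrix.mulVec_smul, dotProduct_sum, dotProduct_smul, smul_eq_mul,
    mul_comm]

theorem eq_zero_of_dotProduct_mulVec_eq_zero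
    (h_on : ∀ i j, e i ⬝ᵥ e j = if i = j then (1 : ℝ) else 0) {M : Matrix ι ι ℝ}
    (h : ∀ a b, e a ⬝ᵥ M *ᵥ e b = 0) : M = 0 := by
  refine Matrix.ext_of_mulVec_single fun c => ?_
  rw [Matrix.zero_mulVec, ← sum_dotProduct_smul_eq_of_orthonormal h_on (M *ᵥ _)]
  refine Finset.sum_eq_zero fun a _ => ?_
  rw [dotProduct_mulVec_eq_sum_of_orthonormal h_on M (e a)]
  simp only [h, zero_mul, Finset.sum_const_zero, zero_smul]

theorem dotProduct_sum_mulVec_of_orthonormal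
    (h_on : ∀ i j, e i ⬝ᵥ e j = if i = j then (1 : ℝ) else 0) (c : ι → ι → ℝ) (a b : ι) :
    e a ⬝ᵥ (Matrix.of fun x y => ∑ i, ∑ j, c i j * e i x * e j y) *ᵥ e b = c a b := by
  have hconj : (Matrix.of fun x y => ∑ i, ∑ j, c i j * e i x * e j y) =
      (Matrix.of e)ᵀ * Matrix.of c * Matrix.of e := by
    ext x y
    simp only [Matrix.of_apply, Matrix.mul_apply, Matrix.transpose_apply, Finset.sum_mul]
    rw [Finset.sum_comm]
    exact Finset.sum_congr rfl fun i _ => Finset.sum_congr rfl fun j _ => by ring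
  have hsingle : ∀ b, Matrix.of e *ᵥ e b = Pi.single b 1 := fun b => by
    ext i
    rw [Pi.single_apply, ← h_on i b]
    rfl
  rw [hconj, ← Matrix.mulVec_mulVec, ← Matrix.mulVec_mulVec, hsingle, Matrix.dotProduct_mulVec,
    Matrix.vecMul_transpose, hsingle, single_one_dotProduct, Matrix.mulVec_single_one]
  rfl

end Orthonormal

theorem Matrix.pow_succ_mul_mulVec {ι κ R : Type*} [Fintype ι] [DecidableEq ι] [Fintype κ]
    [Semiring R] (A : Matrix ι ι R) (B : Matrix ι κ R) (p : ℕ) (v : κ → R) :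
    (A ^ (p + 1) * B) *ᵥ v = A *ᵥ ((A ^ p * B) *ᵥ v) := by
  rw [Matrix.mulVec_mulVec, pow_succ', Matrix.mul_assoc]

theorem NormedSpace.exp_eq_sum_range_of_pow_eq_zero {𝔸 : Type*} [Ring 𝔸] [Algebra ℝ 𝔸]
    [TopologicalSpace 𝔸] [IsTopologicalRing 𝔸] {x : 𝔸} {n : ℕ} (h : x ^ n = 0) :
    NormedSpace.exp x = ∑ p ∈ range n, (p.factorial : ℝ)⁻¹ • x ^ p := by
  rw [NormedSpace.exp_eq_tsum ℝ]
  exact tsum_eq_sum fun p hp => by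
    rw [pow_eq_zero_of_le (not_lt.mp (mem_range.not.mp hp)) h, smul_zero]

open scoped Norms.Operator in
theorem Matrix.continuous_exp_smul {ι : Type*} [Fintype ι] [DecidableEq ι] (M : Matrix ι ι ℝ) :
    Continuous fun t : ℝ => NormedSpace.exp (t • M) :=
  NormedSpace.exp_continuous.comp (continuous_id.smul continuous_const)

theorem dotProduct_mulVec_intervalIntegral {ι : Type*} [Fintype ι] {F : ℝ → Matrix ι ι ℝ}
    {a b : ℝ} (hF : ∀ i j, IntervalIntegrable (fun s => F s i j) volume a b)
    (x y : ι → ℝ) :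
    x ⬝ᵥ (Matrix.of fun i j => ∫ s in a..b, F s i j) *ᵥ y = ∫ s in a..b, x ⬝ᵥ F s *ᵥ y := by
  have hrow : ∀ i, IntervalIntegrable (fun s => ∑ j, x i * (F s i j * y j)) volume a b :=
    fun i => by simpa only [Finset.sum_fn] using
      IntervalIntegrable.sum univ fun j _ => ((hF i j).mul_const (y j)).const_mul (x i)
  calc x ⬝ᵥ (Matrix.of fun i j => ∫ s in a..b, F s i j) *ᵥ y
      = ∑ i, ∫ s in a..b, ∑ j, x i * (F s i j * y j) := by
        simp only [dotProduct, Matrix.mulVec, Matrix.of_apply, Finset.mul_sum]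
        refine Finset.sum_congr rfl fun i _ => ?_
        rw [intervalIntegral.integral_finsetSum fun j _ =>
          ((hF i j).mul_const (y j)).const_mul (x i)]
        simp only [intervalIntegral.integral_const_mul, intervalIntegral.integral_mul_const]
    _ = ∫ s in a..b, x ⬝ᵥ F s *ᵥ y := by
        rw [← intervalIntegral.integral_finsetSum fun i _ => hrow i]
        simp only [dotProduct, Matrix.mulVec, Finset.mul_sum]

open Nat in
theorem integral_pow_mul_one_sub_pow (p q : ℕ) :
    ∫ s in (0 : ℝ)..1, s ^ p * (1 - s) ^ q = (p ! * q ! : ℝ) / (p + q + 1)! := by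
  induction q generalizing p with
  | zero =>
    simp only [pow_zero, mul_one, integral_pow, one_pow, add_zero, factorial_zero]
    rw [zero_pow (succ_ne_zero p), factorial_succ]
    push_cast
    field_simp
    ring
  | succ q ih =>
    -- integration by parts against `s ^ (p + 1)`
    have hparts := intervalIntegral.integral_mul_deriv_eq_deriv_mul
      (u := fun s : ℝ => (1 - s) ^ (q + 1)) (v := fun s : ℝ => s ^ (p + 1))
      (u' := fun s => -((q + 1 : ℝ) * (1 - s) ^ q)) (v' := fun s => (p + 1 : ℝ) * s ^ p)
      (a := 0) (b := 1)
      (fun s _ => by simpa [mul_comm] using ((hasDerivAt_id s).const_sub 1).fun_pow (q + 1))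
      (fun s _ => by simpa using hasDerivAt_pow (p + 1) s)
      ((by fun_prop : Continuous _).intervalIntegrable _ _)
      ((by fun_prop : Continuous _).intervalIntegrable _ _)
    have hlhs : ∫ s in (0 : ℝ)..1, (1 - s) ^ (q + 1) * ((p + 1 : ℝ) * s ^ p) =
        (p + 1) * ∫ s in (0 : ℝ)..1, s ^ p * (1 - s) ^ (q + 1) := by
      rw [← intervalIntegral.integral_const_mul]
      exact intervalIntegral.integral_congr fun s _ => by ring
    have hrhs : ∫ s in (0 : ℝ)..1, -((q + 1 : ℝ) * (1 - s) ^ q) * s ^ (p + 1) =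
        -((q + 1) * ∫ s in (0 : ℝ)..1, s ^ (p + 1) * (1 - s) ^ q) := by
      rw [← intervalIntegral.integral_const_mul, ← intervalIntegral.integral_neg]
      exact intervalIntegral.integral_congr fun s _ => by ring
    rw [hlhs, hrhs, ih (p + 1), show p + 1 + q + 1 = p + (q + 1) + 1 by ring] at hparts
    have hp : (p + 1 : ℝ) ≠ 0 := by positivity
    rw [← mul_right_inj' hp]
    simp only [sub_self, zero_pow (succ_ne_zero q), zero_mul, one_pow, sub_zero,
      zero_pow (succ_ne_zero p), mul_zero, zero_sub, neg_neg] at hparts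
    rw [hparts, factorial_succ p, factorial_succ q]
    push_cast
    ring

section KalmanSpan

variable {d m : ℕ} (A : Matrix (Fin d) (Fin d) ℝ) (B : Matrix (Fin d) (Fin m) ℝ)

theorem kalmanSpan_mono : Monotone (kalmanSpan d m A B) := fun _ _ hN =>
  Submodule.span_mono fun _ ⟨l, hl, v, hv⟩ => ⟨l, hl.trans_le hN, v, hv⟩

theorem kalmanSpan_zero : kalmanSpan d m A B 0 = ⊥ :=
  Submodule.span_eq_bot.mpr fun _ ⟨l, hl, _⟩ => absurd hl (Nat.not_lt_zero l)

theorem mulVec_mem_kalmanSpan {N l : ℕ} (hl : l < N) (v : Fin m → ℝ) :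
    (A ^ l * B) *ᵥ v ∈ kalmanSpan d m A B N :=
  Submodule.subset_span ⟨l, hl, v, rfl⟩

variable {A B}

theorem mulVec_mem_kalmanSpan_succ {k : ℕ} {x : Fin d → ℝ} (hx : x ∈ kalmanSpan d m A B k) :
    A *ᵥ x ∈ kalmanSpan d m A B (k + 1) := by
  induction hx using Submodule.span_induction with
  | mem x hx =>
    obtain ⟨l, hl, v, rfl⟩ := hx
    rw [← Matrix.pow_succ_mul_mulVec]
    exact mulVec_mem_kalmanSpan A B (Nat.succ_lt_succ hl) v
  | zero => simp
  | add x y _ _ hx hy => rw [Matrix.mulVec_add]; exact add_mem hx hy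
  | smul a x _ hx => rw [Matrix.mulVec_smul]; exact Submodule.smul_mem _ a hx

variable {n : ℕ}

theorem dk_eq_of_kalmanSpan_eq_top (hK : kalmanSpan d m A B n = ⊤) : dk A B n = d := by
  rw [dk, hK, finrank_top, Module.finrank_fin_fun]

theorem lvl_le_iff (hK : kalmanSpan d m A B n = ⊤) {j : Fin d} {k : ℕ} :
    lvl A B j ≤ k ↔ (j : ℕ) < dk A B k := by
  have hne : {k | (j : ℕ) < dk A B k}.Nonempty :=
    ⟨n, show (j : ℕ) < dk A B n by rw [dk_eq_of_kalmanSpan_eq_top hK]; exact j.2⟩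
  exact ⟨fun h => (Nat.sInf_mem hne).trans_le
    (Submodule.finrank_mono (kalmanSpan_mono A B h)), fun h => Nat.sInf_le h⟩

theorem one_le_lvl (hK : kalmanSpan d m A B n = ⊤) (j : Fin d) : 1 ≤ lvl A B j := by
  by_contra! h
  have := (lvl_le_iff hK).mp (Nat.lt_one_iff.mp h).le
  rw [dk, kalmanSpan_zero, finrank_bot] at this
  exact Nat.not_lt_zero _ this

theorem lvl_le (hK : kalmanSpan d m A B n = ⊤) (j : Fin d) : lvl A B j ≤ n :=
  (lvl_le_iff hK).mpr (by rw [dk_eq_of_kalmanSpan_eq_top hK]; exact j.2)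

theorem exists_level_step_iff (hK : kalmanSpan d m A B n = ⊤) (i j : Fin d) :
    (∃ k, 1 ≤ k ∧ k ≤ n - 1 ∧
        (dk A B (k - 1) < (j : ℕ) + 1 ∧ (j : ℕ) + 1 ≤ dk A B k) ∧
        (dk A B k < (i : ℕ) + 1 ∧ (i : ℕ) + 1 ≤ dk A B (k + 1))) ↔
      lvl A B i = lvl A B j + 1 := by
  have hlvl : ∀ (a : Fin d) k, 1 ≤ k → (lvl A B a = k ↔
      dk A B (k - 1) < (a : ℕ) + 1 ∧ (a : ℕ) + 1 ≤ dk A B k) := fun a k hk => by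
    rw [Nat.add_one_le_iff, ← lvl_le_iff hK, Nat.lt_add_one_iff, ← not_lt, ← lvl_le_iff hK]
    omega
  constructor
  · rintro ⟨k, hk1, -, hj, hi⟩
    rw [(hlvl j k hk1).mpr hj, (hlvl i (k + 1) (by omega)).mpr hi]
  · intro h
    have hi := (hlvl i (lvl A B j + 1) (by omega)).mp h
    rw [Nat.add_sub_cancel] at hi
    exact ⟨lvl A B j, one_le_lvl hK j, by have := lvl_le hK i; omega,
      (hlvl j _ (one_le_lvl hK j)).mp rfl, hi⟩

end KalmanSpan

structure IsKalmanAdaptedBasis {d m : ℕ} (A : Matrix (Fin d) (Fin d) ℝ)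
    (B : Matrix (Fin d) (Fin m) ℝ) (n : ℕ) (e : Fin d → Fin d → ℝ) : Prop where
  kalmanSpan_eq_top : kalmanSpan d m A B n = ⊤
  orthonormal : ∀ i j : Fin d, e i ⬝ᵥ e j = if i = j then (1 : ℝ) else 0
  kalmanSpan_eq_span : ∀ k : ℕ, 1 ≤ k → k ≤ n →
    kalmanSpan d m A B k = Submodule.span ℝ {x | ∃ j : Fin d, (j : ℕ) < dk A B k ∧ x = e j}

namespace IsKalmanAdaptedBasis

variable {d m n : ℕ} {A : Matrix (Fin d) (Fin d) ℝ} {B : Matrix (Fin d) (Fin m) ℝ}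
  {e : Fin d → Fin d → ℝ}

theorem dotProduct_eq_zero_of_lt_lvl (he : IsKalmanAdaptedBasis A B n e) {k : ℕ} (hk1 : 1 ≤ k)
    (hkn : k ≤ n) {x : Fin d → ℝ} (hx : x ∈ kalmanSpan d m A B k) {i : Fin d}
    (hi : k < lvl A B i) : e i ⬝ᵥ x = 0 := by
  rw [he.kalmanSpan_eq_span k hk1 hkn] at hx
  induction hx using Submodule.span_induction with
  | mem x hx =>
    obtain ⟨j, hj, rfl⟩ := hx
    have hij : i ≠ j := by
      rintro rfl
      exact not_le.mpr hi ((lvl_le_iff he.kalmanSpan_eq_top).mpr hj)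
    rw [he.orthonormal, if_neg hij]
  | zero => exact dotProduct_zero _
  | add x y _ _ hx hy => rw [dotProduct_add, hx, hy, add_zero]
  | smul a x _ hx => rw [dotProduct_smul, hx, smul_zero]

theorem mem_kalmanSpan (he : IsKalmanAdaptedBasis A B n e) {k : ℕ} (hkn : k ≤ n) {j : Fin d}
    (hj : lvl A B j ≤ k) : e j ∈ kalmanSpan d m A B k := by
  rw [he.kalmanSpan_eq_span k ((one_le_lvl he.kalmanSpan_eq_top j).trans hj) hkn]
  exact Submodule.subset_span ⟨j, (lvl_le_iff he.kalmanSpan_eq_top).mp hj, rfl⟩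

theorem dotProduct_Ahat_mulVec (he : IsKalmanAdaptedBasis A B n e) (i j : Fin d) :
    e i ⬝ᵥ Ahat A B e n *ᵥ e j =
      if lvl A B i = lvl A B j + 1 then e i ⬝ᵥ A *ᵥ e j else 0 := by
  rw [Ahat, dotProduct_sum_mulVec_of_orthonormal he.orthonormal]
  simp only [exists_level_step_iff he.kalmanSpan_eq_top i j]

theorem dotProduct_Ahat_pow_mulVec_eq_zero (he : IsKalmanAdaptedBasis A B n e) {p : ℕ}
    {a b : Fin d} (h : lvl A B a ≠ lvl A B b + p) : e a ⬝ᵥ (Ahat A B e n ^ p) *ᵥ e b = 0 := by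
  induction p generalizing a with
  | zero =>
    rw [pow_zero, Matrix.one_mulVec, he.orthonormal, if_neg]
    rintro rfl
    exact h rfl
  | succ p ih =>
    rw [pow_succ', ← Matrix.mulVec_mulVec,
      dotProduct_mulVec_eq_sum_of_orthonormal he.orthonormal]
    refine sum_eq_zero fun i _ => ?_
    rw [he.dotProduct_Ahat_mulVec]
    split_ifs with hai
    · rw [ih (by omega), mul_zero]
    · rw [zero_mul]

theorem Ahat_pow_eq_zero (he : IsKalmanAdaptedBasis A B n e) : Ahat A B e n ^ n = 0 :=
  eq_zero_of_dotProduct_mulVec_eq_zero he.orthonormal fun a b =>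
    he.dotProduct_Ahat_pow_mulVec_eq_zero <| by
      have := lvl_le he.kalmanSpan_eq_top a
      have := one_le_lvl he.kalmanSpan_eq_top b
      omega

theorem dotProduct_Ahat_pow_mul_mulVec (he : IsKalmanAdaptedBasis A B n e) {p : ℕ} (hp : p < n)
    (a : Fin d) (v : Fin m → ℝ) :
    e a ⬝ᵥ (Ahat A B e n ^ p * B) *ᵥ v =
      if lvl A B a = p + 1 then e a ⬝ᵥ (A ^ p * B) *ᵥ v else 0 := by
  induction p generalizing a with
  | zero =>
    rw [pow_zero, Matrix.one_mul]
    split_ifs with ha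
    · rw [pow_zero, Matrix.one_mul]
    · refine he.dotProduct_eq_zero_of_lt_lvl le_rfl hp ?_ ?_
      · simpa using mulVec_mem_kalmanSpan A B zero_lt_one v
      · have := one_le_lvl he.kalmanSpan_eq_top a
        omega
  | succ p ih =>
    have hx := mulVec_mem_kalmanSpan A B p.lt_succ_self v
    rw [Matrix.pow_succ_mul_mulVec, Matrix.pow_succ_mul_mulVec,
      dotProduct_mulVec_eq_sum_of_orthonormal he.orthonormal,
      dotProduct_mulVec_eq_sum_of_orthonormal he.orthonormal A]
    split_ifs with ha
    · refine sum_congr rfl fun i _ => ?_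
      rw [he.dotProduct_Ahat_mulVec, ih (by omega)]
      rcases lt_trichotomy (lvl A B i) (p + 1) with hi | hi | hi
      · -- `A e i ∈ E_{p+1}`, which is orthogonal to `e a`
        rw [if_neg (by omega), if_neg (by omega), zero_mul,
          he.dotProduct_eq_zero_of_lt_lvl (k := p + 1) (by omega) hp.le
            (mulVec_mem_kalmanSpan_succ (he.mem_kalmanSpan (k := p) (by omega) (by omega)))
            (by omega),
          zero_mul]
      · rw [if_pos (by omega), if_pos hi]
      · rw [if_neg (by omega), zero_mul,
          he.dotProduct_eq_zero_of_lt_lvl (by omega) hp.le hx hi, mul_zero]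
    · refine sum_eq_zero fun i _ => ?_
      rw [he.dotProduct_Ahat_mulVec, ih (by omega)]
      split_ifs <;> first | omega | simp

theorem kalmanSpan_Ahat_le (he : IsKalmanAdaptedBasis A B n e) {k : ℕ} (hk : k ≤ n) :
    kalmanSpan d m (Ahat A B e n) B k ≤ kalmanSpan d m A B k := by
  refine Submodule.span_le.mpr ?_
  rintro _ ⟨l, hl, v, rfl⟩
  rw [← sum_dotProduct_smul_eq_of_orthonormal he.orthonormal ((Ahat A B e n ^ l * B) *ᵥ v)]
  refine Submodule.sum_mem _ fun i _ => ?_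
  rw [he.dotProduct_Ahat_pow_mul_mulVec (by omega)]
  split_ifs with hi
  · exact Submodule.smul_mem _ _ (he.mem_kalmanSpan hk (by omega))
  · rw [zero_smul]
    exact Submodule.zero_mem _

theorem kalmanSpan_le_Ahat (he : IsKalmanAdaptedBasis A B n e) {k : ℕ} (hk : k ≤ n) :
    kalmanSpan d m A B k ≤ kalmanSpan d m (Ahat A B e n) B k := by
  induction k with
  | zero => rw [kalmanSpan_zero]; exact bot_le
  | succ k ih =>
    have ih' := (ih (by omega)).trans (kalmanSpan_mono _ B k.le_succ)
    refine Submodule.span_le.mpr ?_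
    rintro _ ⟨l, hl, v, rfl⟩
    rcases (Nat.lt_succ_iff.mp hl).lt_or_eq with hlk | rfl
    · exact ih' (mulVec_mem_kalmanSpan A B hlk v)
    -- `A^l B v - Â^l B v` only has components of level `≤ l`
    set x := (A ^ l * B) *ᵥ v
    set y := (Ahat A B e n ^ l * B) *ᵥ v
    have hcoeff : ∀ i, l < lvl A B i → e i ⬝ᵥ (x - y) = 0 := fun i hi => by
      rw [dotProduct_sub, he.dotProduct_Ahat_pow_mul_mulVec hk, sub_eq_zero]
      split_ifs with h
      · rfl
      · exact he.dotProduct_eq_zero_of_lt_lvl (by omega) hk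
          (mulVec_mem_kalmanSpan A B l.lt_succ_self v) (by omega)
    rw [← sub_add_cancel x y, ← sum_dotProduct_smul_eq_of_orthonormal he.orthonormal (x - y)]
    refine add_mem (Submodule.sum_mem _ fun i _ => ?_) (mulVec_mem_kalmanSpan _ B l.lt_succ_self v)
    by_cases hi : lvl A B i ≤ l
    · exact Submodule.smul_mem _ _ (ih' (he.mem_kalmanSpan (by omega) hi))
    · rw [hcoeff i (by omega), zero_smul]
      exact Submodule.zero_mem _

theorem kalmanSpan_Ahat (he : IsKalmanAdaptedBasis A B n e) {k : ℕ} (hk : k ≤ n) :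
    kalmanSpan d m (Ahat A B e n) B k = kalmanSpan d m A B k :=
  le_antisymm (he.kalmanSpan_Ahat_le hk) (he.kalmanSpan_le_Ahat hk)

open Nat in
theorem exp_smul_Ahat (he : IsKalmanAdaptedBasis A B n e) (t : ℝ) :
    NormedSpace.exp (t • Ahat A B e n) =
      ∑ p ∈ range n, (t ^ p * (p ! : ℝ)⁻¹) • Ahat A B e n ^ p := by
  rw [NormedSpace.exp_eq_sum_range_of_pow_eq_zero
    (by rw [smul_pow, he.Ahat_pow_eq_zero, smul_zero])]
  exact sum_congr rfl fun p _ => by rw [smul_pow, smul_smul, mul_comm]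

theorem vecMul_exp_smul_Ahat_mul (he : IsKalmanAdaptedBasis A B n e) (t : ℝ) (a : Fin d) :
    e a ᵥ* (NormedSpace.exp (t • Ahat A B e n) * B) =
      fun c => t ^ (lvl A B a - 1) * uEnt A B e a c := by
  have hk := one_le_lvl he.kalmanSpan_eq_top a
  have hkn := lvl_le he.kalmanSpan_eq_top a
  ext c
  have hcol : ∀ M : Matrix (Fin d) (Fin m) ℝ, (e a ᵥ* M) c = e a ⬝ᵥ M *ᵥ Pi.single c 1 :=
    fun M => by rw [Matrix.mulVec_single_one]; rfl
  rw [hcol, he.exp_smul_Ahat, Matrix.sum_mul, Matrix.sum_mulVec, dotProduct_sum,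
    sum_eq_single (lvl A B a - 1)]
  · rw [Matrix.smul_mul, Matrix.smul_mulVec, dotProduct_smul, smul_eq_mul,
      he.dotProduct_Ahat_pow_mul_mulVec (by omega), if_pos (by omega), uEnt, ← hcol]
    field_simp
    rfl
  · intro p hp hpa
    rw [Matrix.smul_mul, Matrix.smul_mulVec, dotProduct_smul,
      he.dotProduct_Ahat_pow_mul_mulVec (mem_range.mp hp), if_neg (by omega), smul_zero]
  · exact fun h => absurd (mem_range.mpr (by omega)) h

theorem dotProduct_exp_Ahat_mul_gramian_mulVec (he : IsKalmanAdaptedBasis A B n e)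
    (a b : Fin d) (s : ℝ) :
    e a ⬝ᵥ (NormedSpace.exp (Ahat A B e n) * (NormedSpace.exp ((-(1 * s)) • Ahat A B e n) * B *
      Bᵀ * NormedSpace.exp ((-(1 * s)) • (Ahat A B e n)ᵀ))) *ᵥ e b =
      (-1) ^ (lvl A B b - 1) * (∑ c, uEnt A B e a c * uEnt A B e b c) *
        (s ^ (lvl A B b - 1) * (1 - s) ^ (lvl A B a - 1)) := by
  set N := Ahat A B e n
  have hexp : NormedSpace.exp N * NormedSpace.exp ((-(1 * s)) • N) =
      NormedSpace.exp ((1 - s) • N) := by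
    rw [← Matrix.exp_add_of_commute _ _ ((Commute.refl N).smul_right _)]
    congr 1
    module
  have hfactor : NormedSpace.exp N * (NormedSpace.exp ((-(1 * s)) • N) * B * Bᵀ *
      NormedSpace.exp ((-(1 * s)) • Nᵀ)) =
      NormedSpace.exp ((1 - s) • N) * B * (NormedSpace.exp ((-(1 * s)) • N) * B)ᵀ := by
    rw [← transpose_smul, Matrix.exp_transpose, Matrix.transpose_mul, ← hexp]
    simp only [Matrix.mul_assoc]
  rw [hfactor, ← Matrix.mulVec_mulVec, Matrix.dotProduct_mulVec, Matrix.mulVec_transpose,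
    he.vecMul_exp_smul_Ahat_mul, he.vecMul_exp_smul_Ahat_mul]
  simp only [dotProduct, one_mul, neg_pow s, mul_sum, sum_mul]
  exact sum_congr rfl fun c _ => by ring

theorem Vmat_eq (he : IsKalmanAdaptedBasis A B n e) (a b : Fin d) :
    Vmat A B e a b =
      e a ⬝ᵥ (NormedSpace.exp (Ahat A B e n) * Gamma (Ahat A B e n) B 1 1) *ᵥ e b := by
  have hint : ∀ i j, IntervalIntegrable (fun s : ℝ =>
      (NormedSpace.exp ((-(1 * s)) • Ahat A B e n) * B * Bᵀ *
        NormedSpace.exp ((-(1 * s)) • (Ahat A B e n)ᵀ)) i j) volume 0 1 := fun i j => by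
    have hs : Continuous fun s : ℝ => -(1 * s) := by fun_prop
    have hexp := (Matrix.continuous_exp_smul (Ahat A B e n)).comp hs
    have hexpT := (Matrix.continuous_exp_smul (Ahat A B e n)ᵀ).comp hs
    exact ((((hexp.matrix_mul continuous_const).matrix_mul continuous_const).matrix_mul
      hexpT).matrix_elem i j).intervalIntegrable 0 1
  rw [Matrix.dotProduct_mulVec, ← Matrix.vecMul_vecMul, ← Matrix.dotProduct_mulVec, Gamma,
    dotProduct_mulVec_intervalIntegral hint]
  simp only [← Matrix.dotProduct_mulVec, Matrix.mulVec_mulVec,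
    he.dotProduct_exp_Ahat_mul_gramian_mulVec]
  rw [intervalIntegral.integral_const_mul, integral_pow_mul_one_sub_pow, Vmat, Matrix.of_apply]
  have := one_le_lvl he.kalmanSpan_eq_top a
  have := one_le_lvl he.kalmanSpan_eq_top b
  rw [show lvl A B b - 1 + (lvl A B a - 1) + 1 = lvl A B a + lvl A B b - 1 by omega,
    show lvl A B b + 1 = lvl A B b - 1 + 2 by omega, pow_add]
  ring

end IsKalmanAdaptedBasis

theorem Ahat_kalman_and_V_eq_general
    (d m : ℕ)
    (A : Matrix (Fin d) (Fin d) ℝ) (B : Matrix (Fin d) (Fin m) ℝ)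
    (n : ℕ) (hK : kalmanSpan d m A B n = ⊤)
    (e : Fin d → Fin d → ℝ)
    (h_on : ∀ i j : Fin d, e i ⬝ᵥ e j = if i = j then (1:ℝ) else 0)
    (h_adapt : ∀ k : ℕ, 1 ≤ k → k ≤ n →
      kalmanSpan d m A B k =
        Submodule.span ℝ {x | ∃ j : Fin d, (j : ℕ) < dk A B k ∧ x = e j}) :
    kalmanSpan d m (Ahat A B e n) B n = ⊤ ∧
    (∀ a b : Fin d,
      Vmat A B e a b =
        e a ⬝ᵥ (NormedSpace.exp (Ahat A B e n) * Gamma (Ahat A B e n) B 1 1).mulVec (e b)) ∧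
    (∀ k : ℕ, 1 ≤ k → k ≤ n → kalmanSpan d m (Ahat A B e n) B k = kalmanSpan d m A B k) := by
  have he : IsKalmanAdaptedBasis A B n e := ⟨hK, h_on, h_adapt⟩
  refine ⟨?_, he.Vmat_eq, fun k _ hk => he.kalmanSpan_Ahat hk⟩
  rw [he.kalmanSpan_Ahat le_rfl, hK]

/-- The pair `(Â, B)` satisfies the Kalman rank condition,
`V = exp(Â) ∫₀¹ exp(−sÂ) B B* exp(−sÂ*) ds` (as matrices expressed in the adapted
orthonormal basis `e`), and `span{Â^l B v : 0 ≤ l ≤ k−1} = E_k` for every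
`k ∈ {1,…,n}`. Note that `Gamma (Ahat A B e n) B 1 1 = ∫₀¹ exp(−sÂ) B B* exp(−sÂ*) ds`. -/
theorem Ahat_kalman_and_V_eq
    (d m : ℕ) (hd : 0 < d) (hm : 0 < m)
    (A : Matrix (Fin d) (Fin d) ℝ) (B : Matrix (Fin d) (Fin m) ℝ)
    (n : ℕ) (hK : kalmanSpan d m A B n = ⊤)
    (hmin : ∀ N : ℕ, kalmanSpan d m A B N = ⊤ → n ≤ N)
    (e : Fin d → Fin d → ℝ)
    (h_on : ∀ i j : Fin d, e i ⬝ᵥ e j = if i = j then (1:ℝ) else 0)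
    (h_adapt : ∀ k : ℕ, 1 ≤ k → k ≤ n →
      kalmanSpan d m A B k =
        Submodule.span ℝ {x | ∃ j : Fin d, (j : ℕ) < dk A B k ∧ x = e j}) :
    kalmanSpan d m (Ahat A B e n) B n = ⊤ ∧
    (∀ a b : Fin d,
      Vmat A B e a b =
        e a ⬝ᵥ (NormedSpace.exp (Ahat A B e n) * Gamma (Ahat A B e n) B 1 1).mulVec (e b)) ∧
    (∀ k : ℕ, 1 ≤ k → k ≤ n → kalmanSpan d m (Ahat A B e n) B k = kalmanSpan d m A B k) :=
  Ahat_kalman_and_V_eq_general d m A B n hK e h_on h_adapt
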